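/- For all integers a, b, L with a, L ≥ 0, ∑_{k=0}^{L} (−1)^k q^{binom(k,2)+k(b−L+1)} [L choose k]_q [L+a−k choose b]_q = [a choose b−L]_q. -/
import Mathlib


open Finset

/-- The variable `q`, realized as the generator of the field of rational functions over `ℚ`. -/
noncomputable def qq : RatFunc ℚ := RatFunc.X

/-- `(x)_n = ∏_{j=1}^n (1 - x^j)`. -/
noncomputable def qPoch (x : RatFunc ℚ) (n : ℕ) : RatFunc ℚ :=
  ∏ j ∈ Finset.range n, (1 - x ^ (j + 1))

/-- Gaussian binomial coefficient `[n choose k]_x`, zero unless `0 ≤ k ≤ n`. -/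
noncomputable def qBin (x : RatFunc ℚ) (n k : ℤ) : RatFunc ℚ :=
  if 0 ≤ k ∧ k ≤ n then qPoch x n.toNat / (qPoch x k.toNat * qPoch x (n - k).toNat) else 0

/-- The `q`-trinomial coefficient `[L, b; a]_2` in base `x`. -/
noncomputable def qTri (x : RatFunc ℚ) (L : ℕ) (b a : ℤ) : RatFunc ℚ :=
  ∑ k ∈ Finset.range (L + 1),
    x ^ ((k : ℤ) * (k + b)) * qBin x (L : ℤ) (k : ℤ) * qBin x ((L : ℤ) - k) ((k : ℤ) + a)

/-- The `q`-trinomial `T_n(L, a)`, written in terms of `s = q^{1/2}` (so the base is `s^2`):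
`T_n(L,a) = ∑ s^{r(r-n)} (s²)_L / ((s²)_{(L-a-r)/2} (s²)_{(L+a-r)/2} (s²)_r)`,
the sum over `r ≥ 0` with `L - a - r` even and `r ≤ L - |a|`; zero for `|a| > L`. -/
noncomputable def qT (s : RatFunc ℚ) (n : ℤ) (L : ℕ) (a : ℤ) : RatFunc ℚ :=
  ∑ r ∈ Finset.range (L + 1),
    if Even ((L : ℤ) - a - r) ∧ (r : ℤ) ≤ (L : ℤ) - |a| then
      s ^ ((r : ℤ) * ((r : ℤ) - n)) * qPoch (s ^ 2) L /
        (qPoch (s ^ 2) (((L : ℤ) - a - r) / 2).toNat *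
          qPoch (s ^ 2) (((L : ℤ) + a - r) / 2).toNat * qPoch (s ^ 2) r)
    else 0

/-- The Cartan matrix of the Lie algebra `A_n`. -/
def cartanA (n : ℕ) (i j : Fin n) : ℤ :=
  if i = j then 2 else if |(i : ℤ) - (j : ℤ)| = 1 then -1 else 0

lemma qq_ne_zero : qq ≠ 0 := RatFunc.X_ne_zero

lemma qq_pow_ne_one (m : ℕ) (hm : 0 < m) : qq ^ m ≠ 1 := by
  intro h
  have : (Polynomial.X : Polynomial ℚ) ^ m = 1 := by
    apply RatFunc.algebraMap_injective ℚ  -- guess name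
    simpa [qq, RatFunc.algebraMap_X, map_pow, map_one] using h
  have := congrArg Polynomial.natDegree this
  simp [Polynomial.natDegree_X_pow] at this
  omega

lemma qPoch_ne_zero (n : ℕ) : qPoch qq n ≠ 0 := by
  unfold qPoch
  refine Finset.prod_ne_zero_iff.mpr fun j _ => sub_ne_zero.mpr ?_
  exact fun h => qq_pow_ne_one (j+1) (Nat.succ_pos j) h.symm

lemma qPoch_succ (x : RatFunc ℚ) (n : ℕ) : qPoch x (n+1) = qPoch x n * (1 - x^(n+1)) :=
  Finset.prod_range_succ _ _

lemma qPoch_zero (x : RatFunc ℚ) : qPoch x 0 = 1 := rfl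

lemma qBin_nat (N M : ℕ) (h : M ≤ N) :
    qBin qq (N:ℤ) (M:ℤ) = qPoch qq N / (qPoch qq M * qPoch qq (N - M)) := by
  have h1 : ((N:ℤ) - M).toNat = N - M := by omega
  simp [qBin, h1, Int.ofNat_le.mpr h]

lemma qBin_neg (n k : ℤ) (h : k < 0) : qBin qq n k = 0 := by
  simp [qBin]; omega

lemma qBin_gt (n k : ℤ) (h : n < k) : qBin qq n k = 0 := by
  simp [qBin]; omega

lemma qBin_pascal (n : ℕ) (k : ℤ) :
    qBin qq ((n:ℤ)+1) k = qq ^ k * qBin qq (n:ℤ) k + qBin qq (n:ℤ) (k-1) := by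
  rcases lt_or_ge k 0 with hk | hk
  · rw [qBin_neg _ _ hk, qBin_neg _ _ hk, qBin_neg _ _ (by omega), mul_zero, add_zero]
  have qBin_zero' : ∀ N : ℕ, qBin qq (N:ℤ) 0 = 1 := by
    intro N
    have := qBin_nat N 0 (Nat.zero_le N)
    rw [show ((0:ℕ):ℤ) = 0 from rfl] at this
    rw [this, qPoch_zero, one_mul, Nat.sub_zero, div_self (qPoch_ne_zero N)]
  have qBin_self' : ∀ N : ℕ, qBin qq (N:ℤ) (N:ℤ) = 1 := by
    intro N
    have := qBin_nat N N le_rfl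
    rw [this, Nat.sub_self, qPoch_zero, mul_one, div_self (qPoch_ne_zero N)]
  rcases eq_or_lt_of_le hk with hk0 | hkpos
  · -- k = 0
    subst hk0
    rw [show ((n:ℤ)+1) = ((n+1:ℕ):ℤ) by push_cast; ring, qBin_zero', qBin_zero',
      qBin_neg _ _ (by omega), zpow_zero]
    ring
  rcases lt_or_ge (n:ℤ) k with hgt | hle
  · rcases eq_or_lt_of_le (by omega : (n:ℤ)+1 ≤ k) with he | hgt2
    · -- k = n+1
      subst he
      rw [show ((n:ℤ)+1) = ((n+1:ℕ):ℤ) by push_cast; ring, qBin_self',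
        qBin_gt _ _ (by push_cast; omega), show ((n+1:ℕ):ℤ) - 1 = (n:ℤ) by push_cast; ring,
        qBin_self']
      ring
    · rw [qBin_gt _ _ (by omega), qBin_gt _ _ hgt, qBin_gt _ _ (by omega), mul_zero, add_zero]
  · -- 1 ≤ k ≤ n : main case
    obtain ⟨m, rfl⟩ := Int.eq_ofNat_of_zero_le hk
    have hm1 : 1 ≤ m := by omega
    have hmn : m ≤ n := by omega
    obtain ⟨i, rfl⟩ := Nat.exists_eq_add_of_le hm1
    obtain ⟨j, hj⟩ := Nat.exists_eq_add_of_le hmn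
    subst hj
    have e1 : ((1+i+j:ℕ):ℤ) + 1 = ((1+i+j+1:ℕ):ℤ) := by push_cast; ring
    have e2 : ((1+i:ℕ):ℤ) - 1 = ((i:ℕ):ℤ) := by push_cast; ring
    rw [e1, e2, zpow_natCast,
      qBin_nat (1+i+j+1) (1+i) (by omega),
      qBin_nat (1+i+j) (1+i) (by omega),
      qBin_nat (1+i+j) i (by omega),
      show 1+i+j+1 - (1+i) = j+1 by omega,
      show 1+i+j - (1+i) = j by omega,
      show 1+i+j - i = j+1 by omega,
      show 1+i+j+1 = (i+j+1)+1 by omega,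
      show 1+i+j = (i+j)+1 by omega,
      show 1+i = i+1 by omega,
      qPoch_succ, qPoch_succ, qPoch_succ, qPoch_succ]
    have h1 := qPoch_ne_zero i
    have h2 := qPoch_ne_zero j
    have h3 := qPoch_ne_zero (i+j)
    have h4 : (1 - qq^(i+1)) ≠ 0 := sub_ne_zero.mpr fun h => qq_pow_ne_one _ (by omega) h.symm
    have h5 : (1 - qq^(j+1)) ≠ 0 := sub_ne_zero.mpr fun h => qq_pow_ne_one _ (by omega) h.symm
    have h6 : (1 - qq^(i+j+1)) ≠ 0 := sub_ne_zero.mpr fun h => qq_pow_ne_one _ (by omega) h.symm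
    have h7 : (1 - qq^(i+j+1+1)) ≠ 0 := sub_ne_zero.mpr fun h => qq_pow_ne_one _ (by omega) h.symm
    field_simp
    ring

lemma qBin_zero (N : ℕ) : qBin qq (N:ℤ) 0 = 1 := by
  have := qBin_nat N 0 (Nat.zero_le N)
  rw [show ((0:ℕ):ℤ) = 0 from rfl] at this
  rw [this, qPoch_zero, one_mul, Nat.sub_zero, div_self (qPoch_ne_zero N)]

lemma exp_succ (k t : ℤ) :
    ((k+1)*((k+1)-1))/2 + (k+1)*t = (k*(k-1)/2 + k*(t+1)) + t := by
  obtain ⟨c, hc⟩ := Int.even_mul_succ_self (k-1)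
  have h1 : k*(k-1) = 2*c := by linarith [hc]
  have h2 : (k+1)*((k+1)-1) = 2*(c+k) := by linarith [hc]
  rw [h1, h2, Int.mul_ediv_cancel_left _ two_ne_zero, Int.mul_ediv_cancel_left _ two_ne_zero]
  ring

lemma term_split (L a k : ℕ) (b : ℤ) :
    (-1:RatFunc ℚ)^k * qq ^ ((k:ℤ)*((k:ℤ)-1)/2 + (k:ℤ)*(b - ((L:ℤ)+1) + 1)) *
      qBin qq ((L:ℤ)+1) (k:ℤ) * qBin qq ((L:ℤ)+1 + a - k) b
  = (-1:RatFunc ℚ)^k * qq ^ ((k:ℤ)*((k:ℤ)-1)/2 + (k:ℤ)*(b - (L:ℤ) + 1)) *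
      qBin qq (L:ℤ) (k:ℤ) * qBin qq ((L:ℤ) + ((a:ℤ)+1) - k) b
  + (-1:RatFunc ℚ)^k * qq ^ ((k:ℤ)*((k:ℤ)-1)/2 + (k:ℤ)*(b - (L:ℤ))) *
      qBin qq (L:ℤ) ((k:ℤ)-1) * qBin qq ((L:ℤ)+1 + (a:ℤ) - k) b := by
  rw [qBin_pascal L k,
    show (k:ℤ)*(b - (L:ℤ) + 1) = (k:ℤ)*(b - ((L:ℤ)+1) + 1) + k by ring,
    show (k:ℤ)*(b - (L:ℤ)) = (k:ℤ)*(b - ((L:ℤ)+1) + 1) by ring,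
    show (L:ℤ) + ((a:ℤ)+1) - k = (L:ℤ)+1+a-k by ring]
  simp only [zpow_add₀ qq_ne_zero]
  ring

lemma term_shift (L a k : ℕ) (b : ℤ) :
    (-1:RatFunc ℚ)^(k+1) * qq ^ ((((k+1):ℕ):ℤ)*((((k+1):ℕ):ℤ)-1)/2 + (((k+1):ℕ):ℤ)*(b - (L:ℤ))) *
      qBin qq (L:ℤ) ((((k+1):ℕ):ℤ)-1) * qBin qq ((L:ℤ)+1 + (a:ℤ) - (((k+1):ℕ):ℤ)) b
  = -(qq^(b - (L:ℤ)) * ((-1:RatFunc ℚ)^k * qq ^ ((k:ℤ)*((k:ℤ)-1)/2 + (k:ℤ)*(b - (L:ℤ) + 1)) *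
      qBin qq (L:ℤ) (k:ℤ) * qBin qq ((L:ℤ) + (a:ℤ) - (k:ℤ)) b)) := by
  push_cast
  have e : ((k:ℤ)+1)*(k:ℤ)/2 + ((k:ℤ)+1)*(b - (L:ℤ)) =
      ((k:ℤ)*((k:ℤ)-1)/2 + (k:ℤ)*(b - (L:ℤ) + 1)) + (b - (L:ℤ)) := by
    have := exp_succ (k:ℤ) (b - (L:ℤ))
    rw [show ((k:ℤ)+1)-1 = (k:ℤ) by ring] at this
    exact this
  rw [show ((k:ℕ):ℤ)+1-1 = ((k:ℕ):ℤ) by ring, e, zpow_add₀ qq_ne_zero, pow_succ]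
  ring

theorem stmt16 (a L : ℕ) (b : ℤ) :
    ∑ k ∈ Finset.range (L + 1),
        (-1 : RatFunc ℚ) ^ k *
          qq ^ ((k : ℤ) * ((k : ℤ) - 1) / 2 + (k : ℤ) * (b - (L : ℤ) + 1)) *
          qBin qq (L : ℤ) (k : ℤ) * qBin qq ((L : ℤ) + a - k) b =
      qBin qq (a : ℤ) (b - (L : ℤ)) := by
  induction L generalizing a with
  | zero =>
    simp only [Nat.cast_zero, Finset.sum_range_one]
    norm_num
    rw [show qBin qq 0 0 = 1 from by simpa using qBin_zero 0, one_mul]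
  | succ L ih =>
    push_cast
    rw [Finset.sum_congr rfl (fun k _ => term_split L a k b), Finset.sum_add_distrib,
      Finset.sum_range_succ]
    have hA : qBin qq (L:ℤ) (((L+1:ℕ)):ℤ) = 0 := qBin_gt _ _ (by push_cast; omega)
    rw [hA, mul_zero, zero_mul, add_zero]
    have ih1 := ih (a+1)
    push_cast at ih1
    rw [ih1, Finset.sum_range_succ', Finset.sum_congr rfl (fun k _ => term_shift L a k b)]
    have hB0 : qBin qq (L:ℤ) (((0:ℕ):ℤ) - 1) = 0 := qBin_neg _ _ (by omega)
    rw [hB0, mul_zero, zero_mul, add_zero, Finset.sum_neg_distrib, ← Finset.mul_sum, ih a,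
      show b - ((L:ℤ)+1) = b - (L:ℤ) - 1 by ring]
    have hp := qBin_pascal a (b - (L:ℤ))
    linear_combination hp
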